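/- arXiv:1909.12755 — 5 statements merged into one kernel-verified Lean document; each statement's English description precedes it below -/
import Mathlib

section
/- Let k ≥ 2 be an integer, let c be a metric TSP instance on n ≥ 3 vertices and let T be a k-optimal tour of this instance. Then there exist a metric TSP instance c' on n + 1 vertices and a k-optimal tour T' of c' such that c'(T') = c(T) and the minimum cost of a tour of c' is at most the minimum cost of a tour of c. -/
open Finset

section TSP

variable {V : Type} [Fintype V] [DecidableEq V]

/-- A tour is a Hamiltonian cycle, modeled as a cyclic permutation of all vertices. -/
def IsTour (T : Equiv.Perm V) : Prop :=
  T.IsCycle ∧ T.support = Finset.univ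

/-- The cost of a tour: the sum of the costs of its edges. -/
noncomputable def tourCost (c : V → V → ℝ) (T : Equiv.Perm V) : ℝ :=
  ∑ v, c v (T v)

/-- The edge set of a tour. -/
def tourEdges (T : Equiv.Perm V) : Finset (Sym2 V) :=
  Finset.image (fun v => s(v, T v)) Finset.univ

/-- A metric TSP cost function: symmetric, zero on the diagonal, nonnegative,
satisfying the triangle inequality. -/
def IsMetric (c : V → V → ℝ) : Prop :=
  (∀ u v, c u v = c v u) ∧ (∀ v, c v v = 0) ∧ (∀ u v, 0 ≤ c u v) ∧
    ∀ x y z, c x y ≤ c x z + c z y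

/-- A tour `T` is `k`-optimal if every tour `T'` whose edge set contains at most `k`
edges not in `T` is at least as expensive as `T`. -/
def IsKOptimal (k : ℕ) (c : V → V → ℝ) (T : Equiv.Perm V) : Prop :=
  IsTour T ∧ ∀ T' : Equiv.Perm V, IsTour T' →
    (tourEdges T' \ tourEdges T).card ≤ k → tourCost c T ≤ tourCost c T'

/-- An optimal tour: a tour of minimum cost. -/
def IsOptimalTour (c : V → V → ℝ) (T : Equiv.Perm V) : Prop :=
  IsTour T ∧ ∀ T' : Equiv.Perm V, IsTour T' → tourCost c T ≤ tourCost c T'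

end TSP

/-!
Add a copy `none` of a vertex `x` at distance `0` from `x`, and let tours visit it right after
`x`. This keeps the instance metric and does not change the cost of a tour extended this way, so
the optimum does not increase. Conversely, shortcutting a tour `U` of the larger instance past the
copy gives a tour of the original one which, by the triangle inequality, is not more expensive and
has at most as many edges outside `T` as `U` has outside the extended tour. Hence the extended
tour inherits `k`-optimality, and relabelling `Option (Fin n)` as `Fin (n + 1)` preserves all of
this.
-/

open Equiv Equiv.Perm

theorem IsMetric.comp {V W : Type} {c : V → V → ℝ} (hc : IsMetric c) (f : W → V) :
    IsMetric fun u v => c (f u) (f v) :=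
  ⟨fun _ _ => hc.1 _ _, fun _ => hc.2.1 _, fun _ _ => hc.2.2.1 _ _, fun _ _ _ => hc.2.2.2 _ _ _⟩

theorem Equiv.Perm.SameCycle.map_of_forall_sameCycle_apply {α β : Type*} {σ : Perm α}
    {τ : Perm β} {f : α → β} (hf : ∀ a, τ.SameCycle (f a) (f (σ a))) {a b : α}
    (h : σ.SameCycle a b) : τ.SameCycle (f a) (f b) := by
  obtain ⟨i, rfl⟩ := h
  induction i using Int.induction_on with
  | zero => rfl
  | succ i ih => exact ih.trans (by rw [add_comm, zpow_one_add, mul_apply]; exact hf _)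
  | pred i ih =>
    have h := hf ((σ ^ (-(i : ℤ) - 1)) a)
    rw [← mul_apply, ← zpow_one_add, add_sub_cancel] at h
    exact ih.trans h.symm

theorem tourCost_permCongr {V W : Type} [Fintype V] [Fintype W] (c : V → V → ℝ) (T : Perm V)
    (e : V ≃ W) :
    tourCost (fun u v => c (e.symm u) (e.symm v)) (e.permCongr T) = tourCost c T := by
  simp only [tourCost, permCongr_apply, symm_apply_apply]
  exact e.symm.sum_comp fun v => c v (T v)

section Tours

variable {V W : Type} [Fintype V] [DecidableEq V] [Fintype W] [DecidableEq W]

theorem mem_tourEdges {T : Perm V} {e : Sym2 V} : e ∈ tourEdges T ↔ ∃ v, s(v, T v) = e := by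
  simp [tourEdges]

theorem IsTour.apply_ne {T : Perm V} (hT : IsTour T) (v : V) : T v ≠ v :=
  mem_support.1 (hT.2 ▸ mem_univ v)

theorem IsTour.sameCycle {T : Perm V} (hT : IsTour T) (u v : V) : T.SameCycle u v :=
  hT.1.sameCycle (hT.apply_ne u) (hT.apply_ne v)

theorem isTour_of_sameCycle [Nonempty V] {T : Perm V} (hmoved : ∀ v, T v ≠ v)
    (hsame : ∀ u v, T.SameCycle u v) : IsTour T := by
  inhabit V
  exact ⟨⟨default, hmoved _, fun v _ => hsame _ v⟩,
    eq_univ_of_forall fun v => mem_support.2 (hmoved v)⟩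

theorem IsTour.apply_apply_ne {T : Perm V} (hT : IsTour T) (hV : 3 ≤ Fintype.card V) (v : V) :
    T (T v) ≠ v := by
  intro h
  have hcard := congrArg Finset.card hT.2
  rw [hT.1.eq_swap_of_apply_apply_eq_self (hT.apply_ne v) h,
    card_support_swap (hT.apply_ne v).symm, card_univ] at hcard
  omega

theorem IsTour.permCongr {T : Perm V} (hT : IsTour T) (e : V ≃ W) : IsTour (e.permCongr T) := by
  obtain ⟨x, -⟩ := hT.1
  have : Nonempty W := ⟨e x⟩
  refine isTour_of_sameCycle (fun w => ?_) (fun u w => ?_)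
  · simpa [eq_symm_apply] using hT.apply_ne (e.symm w)
  · have step (v : V) : (e.permCongr T).SameCycle (e v) (e (T v)) :=
      ⟨1, by simp⟩
    simpa using (hT.sameCycle (e.symm u) (e.symm w)).map_of_forall_sameCycle_apply step

theorem tourEdges_permCongr (T : Perm V) (e : V ≃ W) :
    tourEdges (e.permCongr T) = (tourEdges T).image (Sym2.map e) := by
  ext f
  simp only [tourEdges, mem_image, mem_univ, true_and, permCongr_apply]
  exact e.symm.exists_congr_left.trans (by simp)

theorem IsKOptimal.permCongr {k : ℕ} {c : V → V → ℝ} {T : Perm V} (hT : IsKOptimal k c T)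
    (e : V ≃ W) : IsKOptimal k (fun u v => c (e.symm u) (e.symm v)) (e.permCongr T) := by
  refine ⟨hT.1.permCongr e, fun U hU hk => ?_⟩
  obtain ⟨S, rfl⟩ := e.permCongr.surjective U
  have hS : IsTour S := e.permCongr.symm_apply_apply S ▸ hU.permCongr e.symm
  have hinj := Sym2.map.injective e.injective
  rw [tourEdges_permCongr, tourEdges_permCongr, ← image_sdiff _ _ hinj,
    card_image_of_injective _ hinj] at hk
  rw [tourCost_permCongr, tourCost_permCongr]
  exact hT.2 S hS hk

end Tours

section InsertVertex

variable {V : Type}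

def cloneCost (c : V → V → ℝ) (x : V) (u v : Option V) : ℝ :=
  c (u.getD x) (v.getD x)

theorem none_notMem_map_some (e : Sym2 V) : none ∉ Sym2.map some e := by
  simp [Sym2.mem_map]

variable [DecidableEq V]

def insertAfter (T : Perm V) (x : V) : Perm (Option V) :=
  swap none (some (T x)) * T.optionCongr

variable {T : Perm V} {x : V}

@[simp]
theorem insertAfter_none : insertAfter T x none = some (T x) := by
  simp [insertAfter]

@[simp]
theorem insertAfter_some_self : insertAfter T x (some x) = none := by
  simp [insertAfter]

theorem insertAfter_some_of_ne {v : V} (hv : v ≠ x) : insertAfter T x (some v) = some (T v) := by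
  simp [insertAfter, swap_apply_of_ne_of_ne, hv]

variable [Fintype V]

theorem isTour_insertAfter (hT : IsTour T) (x : V) : IsTour (insertAfter T x) := by
  have step (v : V) : (insertAfter T x).SameCycle (some v) (some (T v)) := by
    by_cases hv : v = x
    · subst hv
      exact ⟨2, by simp [sq]⟩
    · exact ⟨1, by simp [insertAfter_some_of_ne hv]⟩
  have from_x : ∀ o, (insertAfter T x).SameCycle (some x) o
    | none => ⟨1, by simp⟩
    | some v => (hT.sameCycle x v).map_of_forall_sameCycle_apply step
  refine isTour_of_sameCycle (fun o => ?_) (fun o o' => (from_x o).symm.trans (from_x o'))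
  rcases o with _ | v
  · simp
  · by_cases hv : v = x
    · simp [hv]
    · simpa [insertAfter_some_of_ne hv] using hT.apply_ne v

theorem tourCost_insertAfter (c : V → V → ℝ) (hx : c x x = 0) (T : Perm V) :
    tourCost (cloneCost c x) (insertAfter T x) = tourCost c T := by
  have hsome : ∑ v, cloneCost c x (some v) (insertAfter T x (some v)) =
      ∑ v ∈ univ.erase x, c v (T v) := by
    rw [← add_sum_erase _ _ (mem_univ x)]
    simp only [insertAfter_some_self, cloneCost, Option.getD_none, Option.getD_some, hx, zero_add]
    exact sum_congr rfl fun v hv => by rw [insertAfter_some_of_ne (ne_of_mem_erase hv)]; rfl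
  rw [tourCost, Fintype.sum_option, hsome, tourCost, ← add_sum_erase _ _ (mem_univ x)]
  rfl

theorem tourCost_removeNone_le {c : V → V → ℝ} (hc : IsMetric c) (x : V)
    (U : Perm (Option V)) :
    tourCost c (removeNone U) ≤ tourCost (cloneCost c x) U := by
  set detour := cloneCost c x none (U none)
  have hv (v : V) : c v (removeNone U v) ≤
      cloneCost c x (some v) (U (some v)) + if U (some v) = none then detour else 0 := by
    cases h : U (some v) with
    | none =>
      have h' := removeNone_none U h
      simp only [cloneCost, Option.getD_none, Option.getD_some, if_true, detour, ← h']
      exact hc.2.2.2 _ _ _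
    | some w =>
      have h' := removeNone_some U ⟨w, h⟩
      rw [h, Option.some_inj] at h'
      simp [cloneCost, h']
  have hdetour : ∑ v, (if U (some v) = none then detour else 0) ≤ detour := by
    cases h : U.symm none with
    | none =>
      simp only [← U.eq_symm_apply, h, reduceCtorEq, if_false, sum_const_zero]
      exact hc.2.2.1 _ _
    | some p => simp [← U.eq_symm_apply, h]
  calc tourCost c (removeNone U) ≤ ∑ v, (cloneCost c x (some v) (U (some v)) +
        if U (some v) = none then detour else 0) := sum_le_sum fun v _ => hv v
    _ ≤ detour + ∑ v, cloneCost c x (some v) (U (some v)) := by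
        rw [sum_add_distrib]; linarith
    _ = tourCost (cloneCost c x) U := by rw [tourCost, Fintype.sum_option]

theorem IsTour.exists_apply_eq_none {U : Perm (Option V)} (hU : IsTour U)
    (hV : 2 ≤ Fintype.card V) : ∃ p q, U (some p) = none ∧ U none = some q ∧ p ≠ q := by
  have hV' : 3 ≤ Fintype.card (Option V) := by rw [Fintype.card_option]; omega
  obtain ⟨q, hq⟩ := Option.ne_none_iff_exists'.1 (hU.apply_ne none)
  obtain ⟨p, hp⟩ := Option.ne_none_iff_exists'.1 fun h : U.symm none = none =>
    hU.apply_ne none (U.symm_apply_eq.1 h).symm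
  refine ⟨p, q, (U.symm_apply_eq.1 hp).symm, hq, ?_⟩
  rintro rfl
  exact hU.apply_apply_ne hV' none (by rw [hq, ← hp, apply_symm_apply])

theorem isTour_removeNone {U : Perm (Option V)} (hU : IsTour U) (hV : 2 ≤ Fintype.card V) :
    IsTour (removeNone U) := by
  have : Nonempty V := Fintype.card_pos_iff.1 (by omega)
  obtain ⟨p, q, hp, hq, hpq⟩ := hU.exists_apply_eq_none hV
  have hrp : removeNone U p = q := Option.some_injective _ ((removeNone_none U hp).trans hq)
  have hr {v : V} (hv : v ≠ p) : some (removeNone U v) = U (some v) :=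
    removeNone_some U (Option.ne_none_iff_exists'.1 fun h =>
      hv (Option.some_injective _ (U.injective (h.trans hp.symm))))
  refine isTour_of_sameCycle (fun v => ?_) (fun u v => ?_)
  · by_cases hv : v = p
    · rwa [hv, hrp, ne_comm]
    · exact fun h => hU.apply_ne (some v) (by rw [← hr hv, h])
  · have step : ∀ o, SameCycle (removeNone U) (o.getD p) ((U o).getD p)
      | none => ⟨1, by simp [hq, hrp]⟩
      | some v => by
          by_cases hv : v = p
          · rw [hv, hp]; rfl
          · rw [← hr hv]; exact ⟨1, by simp⟩
    exact (hU.sameCycle (some u) (some v)).map_of_forall_sameCycle_apply step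

theorem mem_tourEdges_of_map_some_mem {e : Sym2 V}
    (h : Sym2.map some e ∈ tourEdges (insertAfter T x)) : e ∈ tourEdges T := by
  obtain ⟨o, ho⟩ := mem_tourEdges.1 h
  rcases o with _ | v
  · exact absurd (ho ▸ Sym2.mem_mk_left _ _) (none_notMem_map_some e)
  · by_cases hv : v = x
    · rw [hv, insertAfter_some_self] at ho
      exact absurd (ho ▸ Sym2.mem_mk_right _ _) (none_notMem_map_some e)
    · rw [insertAfter_some_of_ne hv, ← Sym2.map_mk] at ho
      exact mem_tourEdges.2 ⟨v, Sym2.map.injective (Option.some_injective V) ho⟩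

theorem eq_or_eq_of_mem_tourEdges_insertAfter {o : Option V}
    (h : s(o, none) ∈ tourEdges (insertAfter T x)) : o = some x ∨ o = some (T x) := by
  obtain ⟨w, hw⟩ := mem_tourEdges.1 h
  rcases w with _ | v
  · rw [insertAfter_none, Sym2.eq_swap] at hw
    exact Or.inr (Sym2.congr_left.1 hw).symm
  · by_cases hv : v = x
    · subst hv
      rw [insertAfter_some_self] at hw
      exact Or.inl (Sym2.congr_left.1 hw).symm
    · rw [insertAfter_some_of_ne hv, ← Sym2.map_mk] at hw
      exact absurd (hw ▸ Sym2.mem_mk_right _ _) (none_notMem_map_some _)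

theorem card_tourEdges_removeNone_sdiff_le {U : Perm (Option V)} (hU : IsTour U)
    (hV : 2 ≤ Fintype.card V) (T : Perm V) (x : V) :
    #(tourEdges (removeNone U) \ tourEdges T) ≤ #(tourEdges U \ tourEdges (insertAfter T x)) := by
  obtain ⟨p, q, hp, hq, hpq⟩ := hU.exists_apply_eq_none hV
  have hrp : removeNone U p = q := Option.some_injective _ ((removeNone_none U hp).trans hq)
  -- The shortcut edge `s(p, q)` is sent to an edge of `U` at `none` outside the extended tour;
  -- both edges of `U` at `none` lie in the extended tour only if `s(p, q) = s(x, T x)`.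
  set y := if s(some p, none) ∈ tourEdges (insertAfter T x) then s(none, some q)
    else s(some p, none)
  have hy_none : none ∈ y := by unfold y; split_ifs <;> simp
  have hyU : y ∈ tourEdges U := by
    unfold y; split_ifs
    exacts [mem_tourEdges.2 ⟨none, by rw [hq]⟩, mem_tourEdges.2 ⟨some p, by rw [hp]⟩]
  have hy (hpqT : s(p, q) ∉ tourEdges T) : y ∉ tourEdges (insertAfter T x) := by
    unfold y; split_ifs with hp'
    · intro hq'
      rw [Sym2.eq_swap] at hq'
      refine hpqT (mem_tourEdges.2 ?_)
      rcases eq_or_eq_of_mem_tourEdges_insertAfter hp' with hp' | hp' <;>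
        rcases eq_or_eq_of_mem_tourEdges_insertAfter hq' with hq' | hq' <;>
        rw [Option.some_inj] at hp' hq' <;> subst hp' hq'
      exacts [absurd rfl hpq, ⟨p, rfl⟩, ⟨q, Sym2.eq_swap⟩, absurd rfl hpq]
    · exact hp'
  refine card_le_card_of_injOn (fun e => if e = s(p, q) then y else Sym2.map some e)
    (fun e he => ?_) (fun e₁ _ e₂ _ h => ?_)
  · obtain ⟨heU, heT⟩ := mem_sdiff.1 he
    simp only [mem_coe]
    split_ifs with he_pq
    · exact mem_sdiff.2 ⟨hyU, hy (he_pq ▸ heT)⟩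
    · obtain ⟨v, rfl⟩ := mem_tourEdges.1 heU
      have hv : U (some v) ≠ none := fun h => he_pq (by
        rw [Option.some_injective V (U.injective (h.trans hp.symm)), hrp])
      refine mem_sdiff.2
        ⟨mem_tourEdges.2 ⟨some v, ?_⟩, fun h => heT (mem_tourEdges_of_map_some_mem h)⟩
      rw [Sym2.map_mk, removeNone_some U (Option.ne_none_iff_exists'.1 hv)]
  · simp only at h
    split_ifs at h with h₁ h₂ h₂
    · rw [h₁, h₂]
    · exact absurd (h ▸ hy_none) (none_notMem_map_some e₂)
    · exact absurd (h ▸ hy_none) (none_notMem_map_some e₁)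
    · exact Sym2.map.injective (Option.some_injective V) h

theorem isKOptimal_insertAfter {k : ℕ} {c : V → V → ℝ} (hc : IsMetric c)
    (hV : 2 ≤ Fintype.card V) (hT : IsKOptimal k c T) (x : V) :
    IsKOptimal k (cloneCost c x) (insertAfter T x) := by
  refine ⟨isTour_insertAfter hT.1 x, fun U hU hk => ?_⟩
  calc tourCost (cloneCost c x) (insertAfter T x) = tourCost c T :=
        tourCost_insertAfter c (hc.2.1 x) T
    _ ≤ tourCost c (removeNone U) :=
        hT.2 _ (isTour_removeNone hU hV) ((card_tourEdges_removeNone_sdiff_le hU hV T x).trans hk)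
    _ ≤ tourCost (cloneCost c x) U := tourCost_removeNone_le hc x U

end InsertVertex

theorem stmt_7_general (k : ℕ) (n : ℕ) (hn : 3 ≤ n)
    (cost : Fin n → Fin n → ℝ) (hmetric : IsMetric cost)
    (T : Equiv.Perm (Fin n)) (hT : IsKOptimal k cost T) :
    ∃ cost' : Fin (n + 1) → Fin (n + 1) → ℝ, IsMetric cost' ∧
      ∃ T' : Equiv.Perm (Fin (n + 1)), IsKOptimal k cost' T' ∧
        tourCost cost' T' = tourCost cost T ∧
        ∀ (S' : Equiv.Perm (Fin (n + 1))) (S : Equiv.Perm (Fin n)),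
          IsOptimalTour cost' S' → IsOptimalTour cost S →
          tourCost cost' S' ≤ tourCost cost S := by
  have hV : 2 ≤ Fintype.card (Fin n) := by rw [Fintype.card_fin]; omega
  let x : Fin n := ⟨0, by omega⟩
  let e : Option (Fin n) ≃ Fin (n + 1) := (finSuccEquiv n).symm
  have hcost (S : Perm (Fin n)) :
      tourCost (fun u v => cloneCost cost x (e.symm u) (e.symm v)) (e.permCongr (insertAfter S x))
        = tourCost cost S := by
    rw [tourCost_permCongr, tourCost_insertAfter cost (hmetric.2.1 x)]
  refine ⟨_, hmetric.comp fun u => (e.symm u).getD x, _,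
    (isKOptimal_insertAfter hmetric hV hT x).permCongr e, hcost T, fun S' S hS' hS => ?_⟩
  exact (hS'.2 _ ((isTour_insertAfter hS.1 x).permCongr e)).trans_eq (hcost S)

theorem stmt_7 (k : ℕ) (hk : 2 ≤ k) (n : ℕ) (hn : 3 ≤ n)
    (cost : Fin n → Fin n → ℝ) (hmetric : IsMetric cost)
    (T : Equiv.Perm (Fin n)) (hT : IsKOptimal k cost T) :
    ∃ cost' : Fin (n + 1) → Fin (n + 1) → ℝ, IsMetric cost' ∧
      ∃ T' : Equiv.Perm (Fin (n + 1)), IsKOptimal k cost' T' ∧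
        tourCost cost' T' = tourCost cost T ∧
        ∀ (S' : Equiv.Perm (Fin (n + 1))) (S : Equiv.Perm (Fin n)),
          IsOptimalTour cost' S' → IsOptimalTour cost S →
          tourCost cost' S' ≤ tourCost cost S :=
  stmt_7_general k n hn cost hmetric T hT
end

section
/- For every finite simple graph G with at least one vertex there exist a nonempty vertex subset S ⊆ V(G) and an edge subset E' ⊆ E(G) with both endpoints of every edge of E' in S, such that the graph (S, E') is connected, every vertex of S has even degree in (S, E'), and |E'| / |S| ≥ (|E(G)| + 1) / |V(G)| − 1. -/
/-!
Let `H ≤ G` have all degrees even and as many edges as possible. Then `G \ H` is a forest,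
since a cycle of `G \ H` could be added to `H`; hence `|E(H)| ≥ |E(G)| - |V| + 1`. Each
component of `H` is connected with even degrees, and some component is at least as dense as
`H` itself, whose density is `|E(H)| / |V| ≥ (|E(G)| + 1) / |V| - 1`.
-/

open Finset SimpleGraph

namespace SimpleGraph

variable {V : Type*}

def EvenDegree (H : SimpleGraph V) : Prop :=
  ∀ v, Even (Nat.card (H.neighborSet v))

lemma EvenDegree.sup [Finite V] {H K : SimpleGraph V} (hH : H.EvenDegree) (hK : K.EvenDegree)
    (hHK : Disjoint H K) : (H ⊔ K).EvenDegree := by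
  intro v
  have hdisj : Disjoint (H.neighborSet v) (K.neighborSet v) :=
    Set.disjoint_left.mpr fun w hvH hvK =>
      (disjoint_edgeSet.mpr hHK).ne_of_mem (H.mem_edgeSet.mpr hvH) (K.mem_edgeSet.mpr hvK) rfl
  rw [Nat.card_coe_set_eq, neighborSet_sup, Set.ncard_union_eq hdisj]
  exact (Nat.card_coe_set_eq _ ▸ hH v).add (Nat.card_coe_set_eq _ ▸ hK v)

lemma Walk.IsCycle.evenDegree_spanningCoe [Finite V] {G : SimpleGraph V} {u : V}
    {p : G.Walk u u} (hp : p.IsCycle) : p.toSubgraph.spanningCoe.EvenDegree := by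
  intro v
  rw [Nat.card_coe_set_eq]
  by_cases hv : v ∈ p.support
  · exact ⟨1, hp.ncard_neighborSet_toSubgraph_eq_two hv⟩
  · have : p.toSubgraph.spanningCoe.neighborSet v = ∅ :=
      Set.eq_empty_of_forall_notMem fun w hw =>
        hv (p.mem_verts_toSubgraph.mp (p.toSubgraph.edge_vert hw))
    simp [this]

lemma IsAcyclic.ncard_edgeSet_lt [Finite V] [Nonempty V] {H : SimpleGraph V} (h : H.IsAcyclic) :
    H.edgeSet.ncard < Nat.card V := by
  classical
  have := Fintype.ofFinite V
  obtain ⟨T, hHT, -, hT⟩ := connected_top.exists_isTree_le_of_le_of_isAcyclic le_top h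
  have hcard := hT.card_edgeFinset
  rw [← coe_edgeFinset, Set.ncard_coe_finset, Nat.card_eq_fintype_card]
  calc #H.edgeFinset ≤ #T.edgeFinset := card_le_card (edgeFinset_mono hHT)
    _ < Fintype.card V := by omega

lemma exists_evenDegree_le_isAcyclic_sdiff [Finite V] (G : SimpleGraph V) :
    ∃ H ≤ G, H.EvenDegree ∧ (G \ H).IsAcyclic := by
  obtain ⟨H, ⟨hHG, hH⟩, hmax⟩ := Set.exists_max_image {H | H ≤ G ∧ H.EvenDegree}
    (fun H => H.edgeSet.ncard) (Set.toFinite _) ⟨⊥, bot_le, fun v => by simp⟩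
  refine ⟨H, hHG, hH, fun u p hp => ?_⟩
  set C := p.toSubgraph.spanningCoe
  have hCG : C ≤ G \ H := p.toSubgraph.spanningCoe_le
  have hHC : Disjoint H C := disjoint_sdiff_self_right.mono_right hCG
  have hC : 0 < C.edgeSet.ncard :=
    (Set.ncard_pos (Set.toFinite _)).mpr ⟨s(u, p.snd), p.toSubgraph_adj_snd hp.not_nil⟩
  have hle := hmax (H ⊔ C)
    ⟨sup_le hHG (hCG.trans sdiff_le), hH.sup hp.evenDegree_spanningCoe hHC⟩
  rw [edgeSet_sup, Set.ncard_union_eq (disjoint_edgeSet.mpr hHC)] at hle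
  omega

lemma exists_evenDegree_le_ncard_edgeSet [Finite V] [Nonempty V] (G : SimpleGraph V) :
    ∃ H ≤ G, H.EvenDegree ∧ G.edgeSet.ncard + 1 ≤ H.edgeSet.ncard + Nat.card V := by
  obtain ⟨H, hHG, hH, hacyc⟩ := G.exists_evenDegree_le_isAcyclic_sdiff
  refine ⟨H, hHG, hH, ?_⟩
  have hsplit := Set.ncard_sdiff_add_ncard_of_subset (edgeSet_mono hHG) (Set.toFinite _)
  have hforest := hacyc.ncard_edgeSet_lt
  rw [edgeSet_sdiff] at hforest
  omega

namespace ConnectedComponent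

variable {H : SimpleGraph V} (c : H.ConnectedComponent)

lemma spanningCoe_toSimpleGraph_le : c.toSimpleGraph.spanningCoe ≤ H :=
  fun _ _ hadj => (c.adj_spanningCoe_toSimpleGraph.mp hadj).2

lemma neighborSet_spanningCoe_toSimpleGraph {v : V} (hv : v ∈ c) :
    c.toSimpleGraph.spanningCoe.neighborSet v = H.neighborSet v := by
  ext w
  rw [mem_neighborSet, mem_neighborSet, adj_spanningCoe_toSimpleGraph]
  exact and_iff_right hv

lemma mem_of_mem_edgeSet_spanningCoe_toSimpleGraph {e : Sym2 V}
    (he : e ∈ c.toSimpleGraph.spanningCoe.edgeSet) {v : V} (hv : v ∈ e) : v ∈ c := by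
  induction e using Sym2.ind with
  | _ a b =>
    obtain ⟨ha, hab⟩ := c.adj_spanningCoe_toSimpleGraph.mp he
    rcases Sym2.mem_iff.mp hv with rfl | rfl
    · exact ha
    · exact (c.mem_supp_congr_adj hab).mp ha

lemma reachable_spanningCoe_toSimpleGraph {u v : V} (hu : u ∈ c) (hv : v ∈ c) :
    c.toSimpleGraph.spanningCoe.Reachable u v :=
  (c.reachable_toSimpleGraph hu hv).map (Embedding.spanningCoe _).toHom

variable (H) [Finite V] [Fintype H.ConnectedComponent]

lemma ncard_edgeSet_le_sum :
    H.edgeSet.ncard ≤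
      ∑ c : H.ConnectedComponent, c.toSimpleGraph.spanningCoe.edgeSet.ncard := by
  refine le_trans (Set.ncard_le_ncard ?_ (Set.toFinite _)) (Set.ncard_iUnion_le_of_fintype _)
  intro e he
  induction e using Sym2.ind with
  | _ u v =>
    exact Set.mem_iUnion.mpr ⟨H.connectedComponentMk u,
      (H.connectedComponentMk u).adj_spanningCoe_toSimpleGraph.mpr ⟨rfl, he⟩⟩

lemma sum_ncard_supp : ∑ c : H.ConnectedComponent, c.supp.ncard = Nat.card V := by
  rw [← Set.ncard_univ, ← H.iUnion_connectedComponentSupp,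
    Set.ncard_iUnion_of_finite (fun _ => Set.toFinite _)
      (H.pairwise_disjoint_supp_connectedComponent), finsum_eq_sum_of_fintype]

lemma exists_edge_density_le [Nonempty V] :
    ∃ c : H.ConnectedComponent, (H.edgeSet.ncard : ℝ) / Nat.card V ≤
      c.toSimpleGraph.spanningCoe.edgeSet.ncard / c.supp.ncard := by
  have hn : (Nat.card V : ℝ) ≠ 0 := Nat.cast_ne_zero.mpr Nat.card_pos.ne'
  obtain ⟨c, -, hc⟩ := Finset.exists_le_of_sum_le Finset.univ_nonempty <|
    calc ∑ c : H.ConnectedComponent, (H.edgeSet.ncard : ℝ) / Nat.card V * c.supp.ncard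
        = H.edgeSet.ncard := by
          rw [← Finset.mul_sum, ← Nat.cast_sum, sum_ncard_supp, div_mul_cancel₀ _ hn]
      _ ≤ ∑ c : H.ConnectedComponent, (c.toSimpleGraph.spanningCoe.edgeSet.ncard : ℝ) := by
          exact_mod_cast ncard_edgeSet_le_sum H
  have hc_pos : (0 : ℝ) < c.supp.ncard := by
    exact_mod_cast (Set.ncard_pos (Set.toFinite _)).mpr c.nonempty_supp
  exact ⟨c, (le_div_iff₀ hc_pos).mpr hc⟩

end ConnectedComponent

end SimpleGraph

theorem stmt_8_general {V : Type} [Fintype V] (G : SimpleGraph V)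
    (hV : 0 < Fintype.card V) :
    ∃ (S : Finset V) (E' : Finset (Sym2 V)), S.Nonempty ∧
      (∀ e ∈ E', e ∈ G.edgeSet) ∧
      (∀ e ∈ E', ∀ v ∈ e, v ∈ S) ∧
      (∀ u ∈ S, ∀ v ∈ S,
        (SimpleGraph.fromEdgeSet (E' : Set (Sym2 V))).Reachable u v) ∧
      (∀ v ∈ S,
        Even (Nat.card ((SimpleGraph.fromEdgeSet (E' : Set (Sym2 V))).neighborSet v))) ∧
      ((Nat.card G.edgeSet : ℝ) + 1) / (Fintype.card V : ℝ) - 1 ≤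
        (E'.card : ℝ) / (S.card : ℝ) := by
  classical
  have : Nonempty V := Fintype.card_pos_iff.mp hV
  obtain ⟨H, hHG, hHeven, hcard⟩ := G.exists_evenDegree_le_ncard_edgeSet
  obtain ⟨c, hc⟩ := ConnectedComponent.exists_edge_density_le H
  set K := c.toSimpleGraph.spanningCoe
  have hK : fromEdgeSet ((Set.toFinite K.edgeSet).toFinset : Set (Sym2 V)) = K := by
    rw [Set.Finite.coe_toFinset, fromEdgeSet_edgeSet]
  refine ⟨(Set.toFinite c.supp).toFinset, (Set.toFinite K.edgeSet).toFinset,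
    (Set.Finite.toFinset_nonempty _).mpr c.nonempty_supp, fun e he => ?_, fun e he v hv => ?_,
    fun u hu v hv => ?_, fun v hv => ?_, ?_⟩
  · exact edgeSet_mono (c.spanningCoe_toSimpleGraph_le.trans hHG)
      (Set.Finite.mem_toFinset _ |>.mp he)
  · exact (Set.Finite.mem_toFinset _).mpr
      (c.mem_of_mem_edgeSet_spanningCoe_toSimpleGraph (Set.Finite.mem_toFinset _ |>.mp he) hv)
  · rw [hK]
    exact c.reachable_spanningCoe_toSimpleGraph (Set.Finite.mem_toFinset _ |>.mp hu)
      (Set.Finite.mem_toFinset _ |>.mp hv)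
  · rw [hK, c.neighborSet_spanningCoe_toSimpleGraph (Set.Finite.mem_toFinset _ |>.mp hv)]
    exact hHeven v
  · have hn : (0 : ℝ) < Fintype.card V := by exact_mod_cast hV
    rw [← Set.ncard_eq_toFinset_card, ← Set.ncard_eq_toFinset_card, Nat.card_coe_set_eq]
    rw [Nat.card_eq_fintype_card] at hcard hc
    calc ((G.edgeSet.ncard : ℝ) + 1) / Fintype.card V - 1
        ≤ H.edgeSet.ncard / Fintype.card V := by
          rw [div_sub_one hn.ne', div_le_div_iff_of_pos_right hn, sub_le_iff_le_add]
          exact_mod_cast hcard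
      _ ≤ K.edgeSet.ncard / c.supp.ncard := hc

theorem stmt_8 {V : Type} [Fintype V] [DecidableEq V] (G : SimpleGraph V)
    (hV : 0 < Fintype.card V) :
    ∃ (S : Finset V) (E' : Finset (Sym2 V)), S.Nonempty ∧
      (∀ e ∈ E', e ∈ G.edgeSet) ∧
      (∀ e ∈ E', ∀ v ∈ e, v ∈ S) ∧
      (∀ u ∈ S, ∀ v ∈ S,
        (SimpleGraph.fromEdgeSet (E' : Set (Sym2 V))).Reachable u v) ∧
      (∀ v ∈ S,
        Even (Nat.card ((SimpleGraph.fromEdgeSet (E' : Set (Sym2 V))).neighborSet v))) ∧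
      ((Nat.card G.edgeSet : ℝ) + 1) / (Fintype.card V : ℝ) - 1 ≤
        (E'.card : ℝ) / (S.card : ℝ) :=
  stmt_8_general G hV
end

section
/- Let 0 < r < 1 and n ≥ 0 be real numbers, and let f, q : ℕ → ℝ be nonnegative sequences such that q(l) ≤ f(l) for all l and Σ_{l=0}^{∞} q(l) ≤ n (the sum converging). Suppose there exists j ∈ ℕ with Σ_{l=0}^{j} f(l) ≥ n, and let l* be the least such j. Then Σ_{l=0}^{∞} q(l)·r^l ≤ Σ_{l=0}^{l*} f(l)·r^l. -/
theorem stmt_11 (r n : ℝ) (hr0 : 0 < r) (hr1 : r < 1) (hn : 0 ≤ n)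
    (f q : ℕ → ℝ) (hf : ∀ l, 0 ≤ f l) (hq : ∀ l, 0 ≤ q l)
    (hqf : ∀ l, q l ≤ f l) (hsum : Summable q) (hqn : ∑' l, q l ≤ n)
    (lstar : ℕ) (h1 : n ≤ ∑ l ∈ Finset.range (lstar + 1), f l)
    (h2 : ∀ j < lstar, ∑ l ∈ Finset.range (j + 1), f l < n) :
    ∑' l, q l * r ^ l ≤ ∑ l ∈ Finset.range (lstar + 1), f l * r ^ l := by
  classical
  set F := ∑ l ∈ Finset.range lstar, f l with hF
  have hFn : F ≤ n := by
    rcases Nat.eq_zero_or_pos lstar with h | h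
    · simp [hF, h, hn]
    · have := h2 (lstar - 1) (Nat.pred_lt h.ne')
      rw [Nat.sub_add_cancel h] at this
      exact this.le
  set g : ℕ → ℝ := fun l => if l < lstar then f l else if l = lstar then n - F else 0 with hg
  have hg0 : ∀ l, 0 ≤ g l := by
    intro l
    simp only [hg]
    split
    · exact hf l
    · split
      · linarith
      · exact le_refl 0
  -- prefix sums of g for k ≤ lstar equal those of f
  have hgeqf : ∀ k, k ≤ lstar → ∑ i ∈ Finset.range k, g i = ∑ i ∈ Finset.range k, f i := by
    intro k hk
    apply Finset.sum_congr rfl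
    intro i hi
    have : i < lstar := lt_of_lt_of_le (Finset.mem_range.mp hi) hk
    simp [hg, this]
  -- prefix sums of g for k > lstar equal n
  have hgn : ∀ k, lstar < k → ∑ i ∈ Finset.range k, g i = n := by
    intro k hk
    have hsub : Finset.range (lstar + 1) ⊆ Finset.range k := by
      intro x hx
      exact Finset.mem_range.mpr (lt_of_lt_of_le (Finset.mem_range.mp hx) hk)
    have hzero : ∀ x ∈ Finset.range k, x ∉ Finset.range (lstar + 1) → g x = 0 := by
      intro x _ hx
      have : lstar < x := by simpa [Nat.lt_succ_iff, not_le] using hx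
      simp [hg, Nat.lt_asymm this, this.ne']
    rw [← Finset.sum_subset hsub hzero, Finset.sum_range_succ,
      hgeqf lstar le_rfl, ← hF]
    simp [hg]
  have hprefix : ∀ k, ∑ i ∈ Finset.range k, q i ≤ ∑ i ∈ Finset.range k, g i := by
    intro k
    rcases le_or_gt k lstar with hk | hk
    · rw [hgeqf k hk]
      exact Finset.sum_le_sum fun i _ => hqf i
    · rw [hgn k hk]
      calc ∑ i ∈ Finset.range k, q i ≤ ∑' i, q i := by
            exact Summable.sum_le_tsum _ (fun i _ => hq i) hsum
        _ ≤ n := hqn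
  -- Abel-type inequality
  have abel : ∀ N, (∑ i ∈ Finset.range N, (g i - q i)) * r ^ N
      ≤ ∑ i ∈ Finset.range N, (g i - q i) * r ^ i := by
    intro N
    induction N with
    | zero => simp
    | succ N ih =>
      have hC : 0 ≤ ∑ i ∈ Finset.range (N + 1), (g i - q i) := by
        rw [Finset.sum_sub_distrib]
        linarith [hprefix (N + 1)]
      have hrp : (0:ℝ) < r ^ N := pow_pos hr0 N
      have hstep : (∑ i ∈ Finset.range (N + 1), (g i - q i)) * r ^ (N + 1)
          ≤ (∑ i ∈ Finset.range (N + 1), (g i - q i)) * r ^ N := by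
        apply mul_le_mul_of_nonneg_left _ hC
        calc r ^ (N + 1) = r ^ N * r := pow_succ r N
          _ ≤ r ^ N * 1 := by nlinarith
          _ = r ^ N := mul_one _
      rw [Finset.sum_range_succ (fun i => (g i - q i) * r ^ i)]
      calc (∑ i ∈ Finset.range (N + 1), (g i - q i)) * r ^ (N + 1)
          ≤ (∑ i ∈ Finset.range (N + 1), (g i - q i)) * r ^ N := hstep
        _ = (∑ i ∈ Finset.range N, (g i - q i)) * r ^ N + (g N - q N) * r ^ N := by
            rw [Finset.sum_range_succ]; ring
        _ ≤ ∑ i ∈ Finset.range N, (g i - q i) * r ^ i + (g N - q N) * r ^ N := by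
            linarith
  -- pointwise partial-sum bound
  have hbound : ∀ N, ∑ i ∈ Finset.range N, q i * r ^ i
      ≤ ∑ l ∈ Finset.range (lstar + 1), f l * r ^ l := by
    intro N
    have hC : 0 ≤ (∑ i ∈ Finset.range N, (g i - q i)) * r ^ N := by
      apply mul_nonneg _ (pow_pos hr0 N).le
      rw [Finset.sum_sub_distrib]
      linarith [hprefix N]
    have h3 : ∑ i ∈ Finset.range N, q i * r ^ i ≤ ∑ i ∈ Finset.range N, g i * r ^ i := by
      have := (hC.trans (abel N))
      rw [Finset.sum_congr rfl (fun i _ => sub_mul (g i) (q i) (r ^ i)),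
        Finset.sum_sub_distrib] at this
      linarith
    have h4 : ∑ i ∈ Finset.range N, g i * r ^ i ≤ ∑ i ∈ Finset.range (lstar + 1), g i * r ^ i := by
      rcases le_or_gt N (lstar + 1) with hk | hk
      · apply Finset.sum_le_sum_of_subset_of_nonneg
        · exact Finset.range_subset_range.mpr hk
        · intro i _ _
          exact mul_nonneg (hg0 i) (pow_pos hr0 i).le
      · rw [← Finset.sum_subset (Finset.range_subset_range.mpr hk.le)]
        intro x _ hx
        have : lstar < x := by simpa [Nat.lt_succ_iff, not_le] using hx
        simp [hg, Nat.lt_asymm this, this.ne']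
    have h5 : ∑ i ∈ Finset.range (lstar + 1), g i * r ^ i
        ≤ ∑ i ∈ Finset.range (lstar + 1), f i * r ^ i := by
      apply Finset.sum_le_sum
      intro i hi
      apply mul_le_mul_of_nonneg_right _ (pow_pos hr0 i).le
      rcases lt_or_eq_of_le (Nat.lt_succ_iff.mp (Finset.mem_range.mp hi)) with h | h
      · simp [hg, h]
      · subst h
        have : n ≤ F + f i := by
          rw [hF, ← Finset.sum_range_succ]; exact h1
        simp only [hg, lt_irrefl, if_false, if_pos rfl]
        simp
        linarith
    linarith
  exact Real.tsum_le_of_sum_range_le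
    (fun l => mul_nonneg (hq l) (pow_pos hr0 l).le) hbound
end

section
/- Let c₁, c₂, c₃ > 0 be real constants. There exist a constant C > 0 and a natural number N such that for every natural number n ≥ N and every real number f > 1 satisfying (c₁·f)^{c₂·f^{c₃}} ≤ n, one has f ≤ C · (log n / log log n)^{1/c₃}. -/
theorem stmt_12 (c₁ c₂ c₃ : ℝ) (h1 : 0 < c₁) (h2 : 0 < c₂) (h3 : 0 < c₃) :
    ∃ (C : ℝ) (N : ℕ), 0 < C ∧ ∀ n : ℕ, N ≤ n → ∀ f : ℝ, 1 < f →
      (c₁ * f) ^ (c₂ * f ^ c₃) ≤ (n : ℝ) →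
      f ≤ C * (Real.log n / Real.log (Real.log n)) ^ (1 / c₃) := by
  set A : ℝ := max 1 (4 * c₃ * (-Real.log c₁)) with hA
  refine ⟨(max 2 (4 * c₃ / c₂)) ^ (1/c₃), ⌈Real.exp (Real.exp A)⌉₊, ?_, ?_⟩
  · have : (0:ℝ) < max 2 (4 * c₃ / c₂) := lt_of_lt_of_le two_pos (le_max_left _ _)
    positivity
  intro n hn f hf hle
  have hf0 : (0:ℝ) < f := lt_trans one_pos hf
  have hA1 : (1:ℝ) ≤ A := le_max_left _ _
  have hAc : -(4 * c₃ * Real.log c₁) ≤ A := by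
    have := le_max_right 1 (4 * c₃ * (-Real.log c₁)); linarith
  have hnR : Real.exp (Real.exp A) ≤ (n:ℝ) := by
    have := Nat.ceil_le.mp hn
    exact_mod_cast this
  set L := Real.log n with hLdef
  have hL : Real.exp A ≤ L := by
    calc Real.exp A = Real.log (Real.exp (Real.exp A)) := (Real.log_exp _).symm
      _ ≤ L := Real.log_le_log (Real.exp_pos _) hnR
  have hL0 : 0 < L := lt_of_lt_of_le (Real.exp_pos _) hL
  set LL := Real.log L with hLLdef
  have hLL : A ≤ LL := by
    calc A = Real.log (Real.exp A) := (Real.log_exp _).symm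
      _ ≤ LL := Real.log_le_log (Real.exp_pos _) hL
  have hLL0 : 0 < LL := lt_of_lt_of_le one_pos (le_trans hA1 hLL)
  have hff : 0 < c₁ * f := by positivity
  have hmain : c₂ * f ^ c₃ * Real.log (c₁ * f) ≤ L := by
    have := Real.log_le_log (Real.rpow_pos_of_pos hff _) hle
    rwa [Real.log_rpow hff] at this
  set S := Real.sqrt L with hSdef
  have hS0 : 0 < S := Real.sqrt_pos.mpr hL0
  have hSS : S * S = L := Real.mul_self_sqrt hL0.le
  have hfc0 : 0 < f ^ c₃ := Real.rpow_pos_of_pos hf0 _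
  have key : f ^ c₃ ≤ (max 2 (4 * c₃ / c₂)) * (L / LL) := by
    rcases le_or_gt (f ^ c₃) S with hcase | hcase
    · -- small case: f^c₃ ≤ √L, and LL ≤ 2√L
      have hLL2S : LL ≤ 2 * S := by
        have h2 := Real.log_le_sub_one_of_pos hS0
        rw [Real.log_sqrt hL0.le] at h2
        have : (0:ℝ) ≤ S := hS0.le
        simp only [hLLdef]
        linarith
      have h1 : f ^ c₃ * LL ≤ 2 * L := by nlinarith [hfc0.le, hLL0.le]
      have h2 : f ^ c₃ ≤ 2 * (L / LL) := by
        rw [mul_div_assoc'] at *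
        exact (le_div_iff₀ hLL0).mpr h1
      calc f ^ c₃ ≤ 2 * (L / LL) := h2
        _ ≤ (max 2 (4 * c₃ / c₂)) * (L / LL) := by
            apply mul_le_mul_of_nonneg_right (le_max_left _ _) (div_pos hL0 hLL0).le
    · -- large case
      have hlogf : LL / 2 ≤ c₃ * Real.log f := by
        have h1 : Real.log S ≤ Real.log (f ^ c₃) := Real.log_le_log hS0 hcase.le
        rwa [Real.log_rpow hf0, Real.log_sqrt hL0.le] at h1
      have hlogc : LL / (4 * c₃) ≤ Real.log (c₁ * f) := by
        rw [Real.log_mul h1.ne' hf0.ne']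
        have h4 : -Real.log c₁ ≤ A / (4 * c₃) := by
          rw [le_div_iff₀ (by positivity)]; linarith
        have h5 : Real.log f ≥ LL / (2 * c₃) := by
          rw [ge_iff_le, div_le_iff₀ (by positivity)]; nlinarith
        have h6 : A / (4 * c₃) ≤ LL / (4 * c₃) := by
          apply div_le_div_of_nonneg_right hLL (by positivity)
        have h7 : LL / (2 * c₃) = LL / (4 * c₃) + LL / (4 * c₃) := by ring
        nlinarith
      have h8 : f ^ c₃ * (c₂ * (LL / (4 * c₃))) ≤ L := by
        calc f ^ c₃ * (c₂ * (LL / (4 * c₃))) ≤ f ^ c₃ * (c₂ * Real.log (c₁ * f)) := by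
              apply mul_le_mul_of_nonneg_left (mul_le_mul_of_nonneg_left hlogc h2.le) hfc0.le
          _ = c₂ * f ^ c₃ * Real.log (c₁ * f) := by ring
          _ ≤ L := hmain
      have h8' : f ^ c₃ * c₂ * LL ≤ 4 * c₃ * L := by
        have h := mul_le_mul_of_nonneg_right h8 (by positivity : (0:ℝ) ≤ 4 * c₃)
        calc f ^ c₃ * c₂ * LL = f ^ c₃ * (c₂ * (LL / (4 * c₃))) * (4 * c₃) := by
              field_simp
          _ ≤ L * (4 * c₃) := h
          _ = 4 * c₃ * L := by ring
      have h9 : f ^ c₃ ≤ (4 * c₃ / c₂) * (L / LL) := by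
        rw [div_mul_div_comm, le_div_iff₀ (by positivity)]
        nlinarith
      calc f ^ c₃ ≤ (4 * c₃ / c₂) * (L / LL) := h9
        _ ≤ (max 2 (4 * c₃ / c₂)) * (L / LL) := by
            apply mul_le_mul_of_nonneg_right (le_max_right _ _) (div_pos hL0 hLL0).le
  -- conclude by taking (1/c₃)-th power
  have hC'0 : (0:ℝ) < max 2 (4 * c₃ / c₂) := lt_of_lt_of_le two_pos (le_max_left _ _)
  calc f = (f ^ c₃) ^ (1/c₃) := by
        rw [← Real.rpow_mul hf0.le, mul_one_div, div_self h3.ne', Real.rpow_one]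
    _ ≤ ((max 2 (4 * c₃ / c₂)) * (L / LL)) ^ (1/c₃) := by
        exact Real.rpow_le_rpow hfc0.le key (by positivity)
    _ = (max 2 (4 * c₃ / c₂)) ^ (1/c₃) * (L / LL) ^ (1/c₃) := by
        rw [Real.mul_rpow hC'0.le (div_pos hL0 hLL0).le]
end

section
/- Let g ≥ 3 be an integer and let G be a simple graph on N ≥ 3 vertices in which every vertex has degree exactly 2 and whose girth is at least g. Consider the (1,2)-TSP instance on V(G) in which c(u,v) = 1 if {u,v} ∈ E(G) and c(u,v) = 2 for all other pairs u ≠ v. Then this instance has a tour of cost at most N + N/g. -/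
open Finset

/-! A 2-regular graph is a disjoint union of cycles, each of length at least the girth `g`, so it
has `k ≤ N / g` components. Walking around every cycle in one direction gives a permutation `σ`
whose `N` steps are all edges of cost `1`. If `a` and `b` lie on different cycles of `σ`, then
`swap a b * σ` joins the two cycles into one while changing only the successors of `σ⁻¹ a` and
`σ⁻¹ b`; merging the `k` cycles through one representative each yields a tour that differs from
`σ` in at most `k` steps, each of cost at most `2`, so its cost is at most `N + k ≤ N + N / g`. -/

namespace Equiv.Perm

variable {α : Type*} [DecidableEq α] {σ : Perm α} {a b : α}

theorem sameCycle_swap_mul_of_not_sameCycle [Finite α] (h : ¬σ.SameCycle a b) :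
    (swap a b * σ).SameCycle b a := by
  set τ := swap a b * σ
  by_contra hba
  have hstep : ∀ n, (τ ^ n) b = (σ ^ n) b → (τ ^ (n + 1)) b = swap a b ((σ ^ (n + 1)) b) := by
    intro n hn
    rw [pow_succ', mul_apply, hn, mul_apply, ← mul_apply σ, ← pow_succ']
  -- Until `σ` returns to `b`, the `τ`-orbit of `b` follows the `σ`-orbit, which avoids `a`.
  have hpow : ∀ n, (τ ^ n) b = (σ ^ n) b := by
    intro n
    induction n with
    | zero => rfl
    | succ n ih =>
      have hna : (σ ^ (n + 1)) b ≠ a := fun hn =>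
        h (SameCycle.symm ⟨(n + 1 : ℕ), by rwa [zpow_natCast]⟩)
      have hnb : (σ ^ (n + 1)) b ≠ b := fun hn =>
        hba ⟨(n + 1 : ℕ), by rw [zpow_natCast, hstep n ih, hn, swap_apply_right]⟩
      rw [hstep n ih, swap_apply_of_ne_of_ne hna hnb]
  obtain ⟨m, hm⟩ : ∃ m, orderOf σ = m + 1 := Nat.exists_eq_add_one.mpr (orderOf_pos σ)
  have hσm : (σ ^ (m + 1)) b = b := by rw [← hm, pow_orderOf_eq_one, one_apply]
  exact hba ⟨(m + 1 : ℕ), by rw [zpow_natCast, hstep m (hpow m), hσm, swap_apply_right]⟩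

theorem SameCycle.swap_mul [Finite α] (h : ¬σ.SameCycle a b) {x y : α}
    (hxy : σ.SameCycle x y) : (swap a b * σ).SameCycle x y := by
  set τ := swap a b * σ
  have hab : τ.SameCycle a b := by
    simpa [τ, swap_comm] using sameCycle_swap_mul_of_not_sameCycle (σ := σ) fun h' => h h'.symm
  have hstep : ∀ v, τ.SameCycle v (σ v) := by
    intro v
    have hv : τ.SameCycle v (τ v) := ⟨1, by simp⟩
    by_cases hva : σ v = a
    · have hτv : τ v = b := by simp [τ, hva]
      rw [hva]
      exact hv.trans (hτv ▸ hab.symm)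
    by_cases hvb : σ v = b
    · have hτv : τ v = a := by simp [τ, hvb]
      rw [hvb]
      exact hv.trans (hτv ▸ hab)
    · simpa [τ, swap_apply_of_ne_of_ne hva hvb] using hv
  obtain ⟨n, -, rfl⟩ := hxy.exists_pow_eq'
  clear hxy
  induction n with
  | zero => rfl
  | succ n ih => rw [pow_succ', mul_apply]; exact ih.trans (hstep _)

theorem exists_forall_sameCycle [Finite α] (σ : Perm α) (S : Finset α)
    (hS : ∀ x, ∃ a ∈ S, σ.SameCycle a x) :
    ∃ τ : Perm α, (∀ x y, τ.SameCycle x y) ∧ ∀ x, τ x ≠ σ x → σ x ∈ S := by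
  induction S using Finset.strongInduction generalizing σ with
  | H S ih =>
  by_cases hall : ∀ x y, σ.SameCycle x y
  · exact ⟨σ, hall, fun x h => absurd rfl h⟩
  push Not at hall
  obtain ⟨x, y, hxy⟩ := hall
  obtain ⟨a, ha, hax⟩ := hS x
  obtain ⟨b, hb, hby⟩ := hS y
  have hab : ¬σ.SameCycle a b := fun h => hxy (hax.symm.trans (h.trans hby))
  have hcover : ∀ v, ∃ c ∈ S.erase a, (swap a b * σ).SameCycle c v := by
    intro v
    obtain ⟨c, hc, hcv⟩ := hS v
    by_cases hca : c = a
    · subst hca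
      refine ⟨b, mem_erase.mpr ⟨fun h => hab (h ▸ .refl _ _), hb⟩, ?_⟩
      exact (sameCycle_swap_mul_of_not_sameCycle hab).trans (hcv.swap_mul hab)
    · exact ⟨c, mem_erase.mpr ⟨hca, hc⟩, hcv.swap_mul hab⟩
  obtain ⟨τ, hτ, hτσ⟩ := ih (S.erase a) (erase_ssubset ha) _ hcover
  refine ⟨τ, hτ, fun v hv => ?_⟩
  by_cases hvab : σ v = a ∨ σ v = b
  · rcases hvab with h | h <;> rw [h] <;> assumption
  push Not at hvab
  have hσ' : (swap a b * σ) v = σ v := by simp [swap_apply_of_ne_of_ne hvab.1 hvab.2]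
  exact mem_of_mem_erase (hσ' ▸ hτσ v (hσ' ▸ hv))

end Equiv.Perm

namespace SimpleGraph

variable {V : Type*} {G : SimpleGraph V}

theorem Walk.IsCycle.exists_getVert_eq {u x : V} {p : G.Walk u u} (hp : p.IsCycle)
    (hx : x ∈ p.support) : ∃ k < p.length, p.getVert k = x := by
  obtain ⟨k, rfl, hk⟩ := Walk.mem_support_iff_exists_getVert.mp hx
  rcases hk.lt_or_eq with hk | rfl
  · exact ⟨k, hk, rfl⟩
  · exact ⟨0, hp.three_le_length.trans_lt' (by norm_num), by simp⟩

theorem Walk.pow_apply_eq_getVert {u v : V} (p : G.Walk u v) {σ : Equiv.Perm V}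
    (hσ : ∀ k < p.length, σ (p.getVert k) = p.getVert (k + 1)) :
    ∀ n ≤ p.length, (σ ^ n) u = p.getVert n := by
  intro n hn
  induction n with
  | zero => simp
  | succ n ih => rw [pow_succ', Equiv.Perm.mul_apply, ih (by omega), hσ n (by omega)]

section CycleFamily

variable {ι : Type*} {b : ι → V} (p : ∀ i, G.Walk (b i) (b i)) (hp : ∀ i, (p i).IsCycle)
  (f : V → ι) (hf : ∀ i x, x ∈ (p i).support ↔ f x = i)
include hp hf

theorem exists_perm_getVert_succ [Finite V] :
    ∃ σ : Equiv.Perm V,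
      ∀ i, ∀ k < (p i).length, σ ((p i).getVert k) = (p i).getVert (k + 1) := by
  choose pos hpos_lt hpos using fun x => (hp (f x)).exists_getVert_eq ((hf (f x) x).mpr rfl)
  have hf_getVert : ∀ i k, f ((p i).getVert k) = i :=
    fun i k => (hf _ _).mp (Walk.getVert_mem_support _ _)
  have hpos_getVert : ∀ i, ∀ k < (p i).length, pos ((p i).getVert k) = k := by
    intro i k hk
    have hlt := hpos_lt ((p i).getVert k)
    have heq := hpos ((p i).getVert k)
    rw [hf_getVert] at hlt heq
    exact (hp i).getVert_injOn' (Nat.le_sub_one_of_lt hlt) (Nat.le_sub_one_of_lt hk) heq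
  set s : V → V := fun x => (p (f x)).getVert (pos x + 1)
  have hs_inj : Function.Injective s := by
    intro x y hxy
    have hfxy : f x = f y := by simpa only [s, hf_getVert] using congrArg f hxy
    have hx := hpos x
    have hy := hpos y
    have hx_lt := hpos_lt x
    have hy_lt := hpos_lt y
    simp only [s] at hxy
    rw [← hfxy] at hxy hy hy_lt
    have := (hp (f x)).getVert_injOn ⟨Nat.le_add_left 1 _, hx_lt⟩ ⟨Nat.le_add_left 1 _, hy_lt⟩ hxy
    rw [← hx, ← hy, show pos x = pos y by omega]
  refine ⟨Equiv.ofBijective s (Finite.injective_iff_bijective.mp hs_inj), fun i k hk => ?_⟩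
  simp only [Equiv.ofBijective_apply, s, hpos_getVert i k hk]
  rw [hf_getVert]

theorem card_mul_girth_le_card [Fintype ι] [Fintype V] :
    Fintype.card ι * G.girth ≤ Fintype.card V := by
  have hinj : Function.Injective fun ik : ι × Fin G.girth => (p ik.1).getVert ik.2 := by
    rintro ⟨i, k⟩ ⟨j, l⟩ h
    simp only at h
    obtain rfl : i = j := by
      rw [← (hf i _).mp (Walk.getVert_mem_support _ _), h,
        (hf j _).mp (Walk.getVert_mem_support _ _)]
    have hk := k.isLt.trans_le (girth_le_length (hp i))
    have hl := l.isLt.trans_le (girth_le_length (hp i))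
    have := (hp i).getVert_injOn' (Nat.le_sub_one_of_lt hk) (Nat.le_sub_one_of_lt hl) h
    simp_all [Fin.ext_iff]
  simpa using Fintype.card_le_of_injective _ hinj

end CycleFamily

theorem IsCycles.exists_perm_adj_sameCycle [Fintype V] (hG : G.IsCycles)
    (hn : ∀ v, (G.neighborSet v).Nonempty) :
    ∃ σ : Equiv.Perm V, (∀ v, G.Adj v (σ v)) ∧
      ∃ S : Finset V, (∀ v, ∃ a ∈ S, σ.SameCycle a v) ∧ #S * G.girth ≤ Fintype.card V := by
  classical
  have hcyc : ∀ c : G.ConnectedComponent, ∃ b, ∃ p : G.Walk b b,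
      p.IsCycle ∧ ∀ x, x ∈ p.support ↔ G.connectedComponentMk x = c := by
    intro c
    obtain ⟨v, rfl⟩ : ∃ v, G.connectedComponentMk v = c := c.exists_rep
    obtain ⟨p, hp, hverts⟩ := hG.exists_cycle_toSubgraph_verts_eq_connectedComponentSupp
      (c := G.connectedComponentMk v) rfl (hn v)
    refine ⟨v, p, hp, fun x => ?_⟩
    rw [← ConnectedComponent.mem_supp_iff, ← hverts, Walk.verts_toSubgraph]
    rfl
  choose b p hp hf using hcyc
  obtain ⟨σ, hσ⟩ := exists_perm_getVert_succ p hp _ hf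
  have hvert : ∀ v, ∃ k < (p (G.connectedComponentMk v)).length, (p _).getVert k = v :=
    fun v => (hp _).exists_getVert_eq ((hf _ v).mpr rfl)
  refine ⟨σ, fun v => ?_, univ.image b, fun v => ?_, ?_⟩
  · obtain ⟨k, hk, hkv⟩ := hvert v
    rw [← hkv, hσ _ k hk]
    exact Walk.adj_getVert_succ _ hk
  · obtain ⟨k, hk, hkv⟩ := hvert v
    refine ⟨b (G.connectedComponentMk v), mem_image_of_mem _ (mem_univ _), k, ?_⟩
    rw [zpow_natCast, (p _).pow_apply_eq_getVert (hσ _) k hk.le, hkv]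
  · calc #(univ.image b) * G.girth ≤ Fintype.card G.ConnectedComponent * G.girth :=
          Nat.mul_le_mul_right _ card_image_le
      _ ≤ Fintype.card V := card_mul_girth_le_card p hp _ hf

end SimpleGraph

section Tour

open Equiv Equiv.Perm

variable {V : Type} [Fintype V] [DecidableEq V]

theorem isTour_of_forall_sameCycle [Nontrivial V] {T : Perm V}
    (hT : ∀ x y, T.SameCycle x y) : IsTour T := by
  have hne : ∀ x, T x ≠ x := fun x hx => by
    obtain ⟨y, hy⟩ := exists_ne x
    exact hy ((hT x y).eq_of_left hx).symm
  obtain ⟨x⟩ := (inferInstance : Nonempty V)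
  exact ⟨⟨x, hne x, fun y _ => hT x y⟩, eq_univ_of_forall fun y => mem_support.mpr (hne y)⟩

theorem tourCost_le_card_add {G : SimpleGraph V} {cost : V → V → ℝ}
    (h1 : ∀ u v, G.Adj u v → cost u v = 1) (h2 : ∀ u v, u ≠ v → ¬ G.Adj u v → cost u v = 2)
    {σ T : Perm V} (hσ : ∀ v, G.Adj v (σ v)) (hT : IsTour T) :
    tourCost cost T ≤ Fintype.card V + #{v | T v ≠ σ v} := by
  have hv : ∀ v, cost v (T v) ≤ 1 + if T v ≠ σ v then 1 else 0 := by
    intro v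
    split_ifs with h
    · have hTv : v ≠ T v := (mem_support.mp (hT.2 ▸ mem_univ v)).symm
      by_cases hadj : G.Adj v (T v)
      · rw [h1 _ _ hadj]; norm_num
      · rw [h2 _ _ hTv hadj]; norm_num
    · rw [not_not.mp h, h1 _ _ (hσ v)]; norm_num
  calc tourCost cost T = ∑ v, cost v (T v) := rfl
    _ ≤ ∑ v, (1 + if T v ≠ σ v then 1 else 0) := sum_le_sum fun v _ => hv v
    _ = Fintype.card V + #{v | T v ≠ σ v} := by
      rw [sum_add_distrib, sum_boole]; simp

end Tour

theorem stmt_18_general (g N : ℕ) (hg : 3 ≤ g) (hN : 3 ≤ N)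
    (G : SimpleGraph (Fin N))
    (hdeg : ∀ v, Nat.card (G.neighborSet v) = 2)
    (hgirth : (g : ℕ∞) ≤ G.girth)
    (cost : Fin N → Fin N → ℝ)
    (h1 : ∀ u v, G.Adj u v → cost u v = 1)
    (h2 : ∀ u v, u ≠ v → ¬ G.Adj u v → cost u v = 2) :
    ∃ T : Equiv.Perm (Fin N), IsTour T ∧
      tourCost cost T ≤ (N : ℝ) + (N : ℝ) / (g : ℝ) := by
  have hG : G.IsCycles := fun v _ => by rw [← Nat.card_coe_set_eq, hdeg v]
  have hn : ∀ v, (G.neighborSet v).Nonempty := fun v =>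
    Set.nonempty_of_ncard_ne_zero (by rw [← Nat.card_coe_set_eq, hdeg v]; norm_num)
  obtain ⟨σ, hσ, S, hS, hScard⟩ := hG.exists_perm_adj_sameCycle hn
  obtain ⟨T, hT, hTσ⟩ := σ.exists_forall_sameCycle S hS
  have : Nontrivial (Fin N) := Fin.nontrivial_iff_two_le.mpr (by omega)
  have hTour := isTour_of_forall_sameCycle hT
  refine ⟨T, hTour, ?_⟩
  have hchanged : #{v | T v ≠ σ v} ≤ #S :=
    card_le_card_of_injOn σ (fun v hv => hTσ v (mem_filter.mp hv).2) σ.injective.injOn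
  have hSg : (#S : ℝ) * g ≤ N := by
    have : g ≤ G.girth := by exact_mod_cast hgirth
    exact_mod_cast (Nat.mul_le_mul_left _ this).trans (by simpa using hScard)
  have hg0 : (0 : ℝ) < g := by exact_mod_cast (by omega : 0 < g)
  calc tourCost cost T ≤ N + #{v | T v ≠ σ v} := by
        simpa using tourCost_le_card_add h1 h2 hσ hTour
    _ ≤ N + #S := by gcongr
    _ ≤ N + N / g := by gcongr; rwa [le_div_iff₀ hg0]

theorem stmt_18 (g N : ℕ) (hg : 3 ≤ g) (hN : 3 ≤ N)
    (G : SimpleGraph (Fin N))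
    (hdeg : ∀ v, Nat.card (G.neighborSet v) = 2)
    (hgirth : (g : ℕ∞) ≤ G.girth)
    (cost : Fin N → Fin N → ℝ)
    (h0 : ∀ v, cost v v = 0)
    (h1 : ∀ u v, G.Adj u v → cost u v = 1)
    (h2 : ∀ u v, u ≠ v → ¬ G.Adj u v → cost u v = 2) :
    ∃ T : Equiv.Perm (Fin N), IsTour T ∧
      tourCost cost T ≤ (N : ℝ) + (N : ℝ) / (g : ℝ) :=
  stmt_18_general g N hg hN G hdeg hgirth cost h1 h2
end
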